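/- arXiv:1909.01291 — 5 statements merged into one kernel-verified Lean document; each statement's English description precedes it below -/
import Mathlib

section
/- The vectors w_0, ..., w_{n-1} in ℝ^n with coordinates w_k^{(j)} = √(2/n) · sin(2πkj/n + π/4) form an orthonormal family: ⟨w_k, w_l⟩ = δ_{k,l} for all k, l ∈ {0, ..., n-1}. -/
/-! Product-to-sum gives `2 sin(α + π/4) sin(β + π/4) = cos(α - β) + sin(α + β)`, so
`n ⟨w_k, w_l⟩ = ∑_j cos(2π(k-l)j/n) + ∑_j sin(2π(k+l)j/n)`. These are the real and imaginary
parts of a geometric sum of the `n`-th root of unity `exp(2πi/n)^m`, which is `n` when `n ∣ m`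
and `0` otherwise; for `0 ≤ k, l < n` this leaves `n δ_{k,l}`. -/

open Real Finset

theorem geom_sum_eq_ite_of_pow_eq_one {K : Type*} [Field K] [DecidableEq K] {ζ : K} {n : ℕ}
    (hζ : ζ ^ n = 1) : ∑ j ∈ range n, ζ ^ j = if ζ = 1 then (n : K) else 0 := by
  split_ifs with h
  · simp [h]
  · rw [geom_sum_eq h, hζ, sub_self, zero_div]

theorem Complex.sum_exp_two_pi_mul_div_mul_I {n : ℕ} (hn : n ≠ 0) (m : ℤ) :
    ∑ j : Fin n, Complex.exp ((2 * π * m * j / n : ℝ) * Complex.I)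
      = if (n : ℤ) ∣ m then (n : ℂ) else 0 := by
  set ζ := Complex.exp (2 * π * Complex.I / n)
  have hζ : IsPrimitiveRoot ζ n := Complex.isPrimitiveRoot_exp n hn
  have hterm (j : ℕ) : Complex.exp ((2 * π * m * j / n : ℝ) * Complex.I) = (ζ ^ m) ^ j := by
    rw [← zpow_natCast, ← zpow_mul, ← Complex.exp_int_mul]
    push_cast
    ring_nf
  have hpow : (ζ ^ m) ^ n = 1 := by
    rw [← zpow_natCast, ← zpow_mul, mul_comm, zpow_mul, zpow_natCast, hζ.pow_eq_one, one_zpow]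
  simp only [hterm]
  rw [Fin.sum_univ_eq_sum_range (fun j => (ζ ^ m) ^ j), geom_sum_eq_ite_of_pow_eq_one hpow]
  simp only [hζ.zpow_eq_one_iff_dvd]

theorem sum_cos_two_pi_mul_div {n : ℕ} (hn : n ≠ 0) (m : ℤ) :
    ∑ j : Fin n, cos (2 * π * m * j / n) = if (n : ℤ) ∣ m then (n : ℝ) else 0 := by
  have h := congrArg Complex.re (Complex.sum_exp_two_pi_mul_div_mul_I hn m)
  rw [Complex.re_sum] at h
  simp only [Complex.exp_ofReal_mul_I_re] at h
  rw [h]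
  split_ifs <;> simp

theorem sum_sin_two_pi_mul_div {n : ℕ} (hn : n ≠ 0) (m : ℤ) :
    ∑ j : Fin n, sin (2 * π * m * j / n) = 0 := by
  have h := congrArg Complex.im (Complex.sum_exp_two_pi_mul_div_mul_I hn m)
  rw [Complex.im_sum] at h
  simp only [Complex.exp_ofReal_mul_I_im] at h
  rw [h]
  split_ifs <;> simp

theorem two_mul_sin_add_pi_div_four_mul_sin_add_pi_div_four (α β : ℝ) :
    2 * sin (α + π / 4) * sin (β + π / 4) = cos (α - β) + sin (α + β) := by
  rw [two_mul_sin_mul_sin, show α + π / 4 + (β + π / 4) = α + β + π / 2 by ring,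
    show α + π / 4 - (β + π / 4) = α - β by ring, cos_add_pi_div_two, sub_neg_eq_add]

theorem Fin.intCast_dvd_sub_iff {n : ℕ} (k l : Fin n) : (n : ℤ) ∣ (k : ℤ) - l ↔ k = l := by
  refine ⟨fun h => ?_, fun h => by rw [h, sub_self]; exact dvd_zero _⟩
  have := Int.eq_zero_of_abs_lt_dvd h (by rw [abs_lt]; omega)
  exact Fin.ext (by omega)

theorem stmt_5_general (n : ℕ)
    (w : Fin n → Fin n → ℝ)
    (hw : ∀ k j : Fin n,
      w k j = Real.sqrt (2 / n) * Real.sin (2 * Real.pi * k * j / n + Real.pi / 4)) :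
    ∀ k l : Fin n, ∑ j : Fin n, w k j * w l j = if k = l then 1 else 0 := by
  intro k l
  have hn : n ≠ 0 := k.pos.ne'
  have hprod (j : Fin n) : w k j * w l j
      = (cos (2 * π * (k - l : ℤ) * j / n) + sin (2 * π * (k + l : ℤ) * j / n)) / n := by
    rw [hw, hw, mul_mul_mul_comm, mul_self_sqrt (by positivity), div_mul_eq_mul_div, ← mul_assoc,
      two_mul_sin_add_pi_div_four_mul_sin_add_pi_div_four]
    push_cast
    ring_nf
  rw [sum_congr rfl fun j _ => hprod j, ← sum_div, sum_add_distrib, sum_cos_two_pi_mul_div hn,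
    sum_sin_two_pi_mul_div hn, add_zero]
  simp only [Fin.intCast_dvd_sub_iff]
  split_ifs <;> simp [hn]

theorem stmt_5 (n : ℕ) (hn : 1 ≤ n)
    (w : Fin n → Fin n → ℝ)
    (hw : ∀ k j : Fin n,
      w k j = Real.sqrt (2 / n) * Real.sin (2 * Real.pi * k * j / n + Real.pi / 4)) :
    ∀ k l : Fin n, ∑ j : Fin n, w k j * w l j = if k = l then 1 else 0 :=
  stmt_5_general n w hw
end

section
/- The n×n matrix Q whose (j,k) entry is √(2/n) · sin(2πkj/n + π/4) is orthogonal and symmetric. -/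
/-! Since `sin (x + π/4) = (cos x + sin x) / √2`, the matrix `Q` is `n^{-1/2}` times the Hartley
matrix `H j k = cas (2πjk/n)`, `cas = cos + sin`, which is visibly symmetric. The identity
`cas x * cas y = cos (x - y) + sin (x + y)` reduces the entries of `H * Hᵀ` to sums of
`cos (2πmk/n)` and `sin (2πmk/n)` over `k < n`, the real and imaginary parts of a geometric sum
of an `n`-th root of unity: it is `n` when `n ∣ m` and `0` otherwise. Hence `H * Hᵀ = n • 1`. -/

open Real Finset
open scoped Matrix

theorem geom_sum_range_of_pow_eq_one {K : Type*} [Field K] [DecidableEq K] {z : K} {n : ℕ}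
    (hz : z ^ n = 1) :
    ∑ k ∈ range n, z ^ k = if z = 1 then (n : K) else 0 := by
  split_ifs with h
  · simp [h]
  · rw [geom_sum_eq h, hz, sub_self, zero_div]

open Complex in
theorem sum_range_exp_two_pi_mul_I (n : ℕ) (hn : n ≠ 0) (m : ℤ) :
    ∑ k ∈ range n, exp (((2 * π * m * k / n : ℝ) : ℂ) * I)
      = if (n : ℤ) ∣ m then (n : ℂ) else 0 := by
  have hζ := isPrimitiveRoot_exp n hn
  have hterm (k : ℕ) :
      exp (((2 * π * m * k / n : ℝ) : ℂ) * I) = (exp (2 * π * I / n) ^ m) ^ k := by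
    rw [← exp_int_mul, ← Complex.exp_nat_mul]
    push_cast
    ring_nf
  have hpow : (exp (2 * π * I / n) ^ m) ^ n = 1 := by
    rw [← zpow_natCast, ← zpow_mul, mul_comm m, zpow_mul, zpow_natCast, hζ.pow_eq_one, one_zpow]
  simp_rw [hterm, geom_sum_range_of_pow_eq_one hpow, hζ.zpow_eq_one_iff_dvd]

theorem sum_range_cos_two_pi_mul (n : ℕ) (hn : n ≠ 0) (m : ℤ) :
    ∑ k ∈ range n, cos (2 * π * m * k / n) = if (n : ℤ) ∣ m then (n : ℝ) else 0 := by
  have h := congrArg Complex.re (sum_range_exp_two_pi_mul_I n hn m)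
  simp only [Complex.re_sum, Complex.exp_ofReal_mul_I_re] at h
  rw [h]
  split_ifs <;> simp

theorem sum_range_sin_two_pi_mul (n : ℕ) (hn : n ≠ 0) (m : ℤ) :
    ∑ k ∈ range n, sin (2 * π * m * k / n) = 0 := by
  have h := congrArg Complex.im (sum_range_exp_two_pi_mul_I n hn m)
  simp only [Complex.im_sum, Complex.exp_ofReal_mul_I_im] at h
  rw [h]
  split_ifs <;> simp

noncomputable def cas (x : ℝ) : ℝ := cos x + sin x

theorem cas_mul_cas (x y : ℝ) : cas x * cas y = cos (x - y) + sin (x + y) := by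
  simp only [cas, cos_sub, sin_add]
  ring

theorem sin_add_pi_div_four (x : ℝ) : sin (x + π / 4) = cas x / √2 := by
  rw [sin_add, cos_pi_div_four, sin_pi_div_four, cas]
  field_simp
  rw [sq_sqrt zero_le_two]
  ring

theorem sum_range_cas_mul_cas (n : ℕ) (hn : n ≠ 0) {j j' : ℕ} (hj : j < n) (hj' : j' < n) :
    ∑ k ∈ range n, cas (2 * π * k * j / n) * cas (2 * π * k * j' / n)
      = if j = j' then (n : ℝ) else 0 := by
  have hsub (k : ℕ) :
      2 * π * k * j / n - 2 * π * k * j' / n = 2 * π * ((j - j' : ℤ) : ℝ) * k / n := by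
    push_cast; ring
  have hadd (k : ℕ) :
      2 * π * k * j / n + 2 * π * k * j' / n = 2 * π * ((j + j' : ℤ) : ℝ) * k / n := by
    push_cast; ring
  have hdvd : (n : ℤ) ∣ j - j' ↔ j = j' := by
    refine ⟨fun h => ?_, fun h => by simp [h]⟩
    have := Int.eq_zero_of_abs_lt_dvd h (abs_lt.2 ⟨by omega, by omega⟩)
    omega
  simp only [cas_mul_cas, hsub, hadd, sum_add_distrib, sum_range_cos_two_pi_mul n hn,
    sum_range_sin_two_pi_mul n hn, add_zero, hdvd]

noncomputable def hartleyMatrix (n : ℕ) : Matrix (Fin n) (Fin n) ℝ :=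
  Matrix.of fun j k => cas (2 * π * k * j / n)

theorem hartleyMatrix_transpose (n : ℕ) : (hartleyMatrix n)ᵀ = hartleyMatrix n := by
  ext j k
  simp only [hartleyMatrix, Matrix.transpose_apply, Matrix.of_apply]
  ring_nf

theorem hartleyMatrix_mul_transpose (n : ℕ) :
    hartleyMatrix n * (hartleyMatrix n)ᵀ = (n : ℝ) • 1 := by
  obtain rfl | hn := eq_or_ne n 0
  · exact Subsingleton.elim _ _
  ext j j'
  rw [Matrix.mul_apply, Matrix.smul_apply, Matrix.one_apply]
  simp only [hartleyMatrix, Matrix.transpose_apply, Matrix.of_apply]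
  rw [Fin.sum_univ_eq_sum_range (fun k => cas (2 * π * k * j / n) * cas (2 * π * k * j' / n)),
    sum_range_cas_mul_cas n hn j.isLt j'.isLt]
  simp [Fin.val_inj]

open Matrix

theorem stmt_6_general (n : ℕ)
    (Q : Matrix (Fin n) (Fin n) ℝ)
    (hQ : ∀ j k : Fin n,
      Q j k = Real.sqrt (2 / n) * Real.sin (2 * Real.pi * k * j / n + Real.pi / 4)) :
    Qᵀ = Q ∧ Q * Qᵀ = 1 := by
  have hQ_eq : Q = (√n)⁻¹ • hartleyMatrix n := by
    ext j k
    rw [hQ, sin_add_pi_div_four, sqrt_div' _ n.cast_nonneg]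
    simp only [hartleyMatrix, Matrix.smul_apply, of_apply, smul_eq_mul]
    field_simp
  subst hQ_eq
  refine ⟨by rw [transpose_smul, hartleyMatrix_transpose], ?_⟩
  obtain rfl | hn := eq_or_ne n 0
  · exact Subsingleton.elim _ _
  rw [transpose_smul, smul_mul_smul_comm, hartleyMatrix_mul_transpose, smul_smul,
    ← mul_inv, mul_self_sqrt n.cast_nonneg, inv_mul_cancel₀ (by exact_mod_cast hn), one_smul]

theorem stmt_6 (n : ℕ) (hn : 1 ≤ n)
    (Q : Matrix (Fin n) (Fin n) ℝ)
    (hQ : ∀ j k : Fin n,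
      Q j k = Real.sqrt (2 / n) * Real.sin (2 * Real.pi * k * j / n + Real.pi / 4)) :
    Qᵀ = Q ∧ Q * Qᵀ = 1 :=
  stmt_6_general n Q hQ
end

section
/- If λ_1, ..., λ_{n-1} ≤ 0 satisfy ∑_{j=1}^{n-1} λ_j ≥ -1/2, then the symmetric matrix P(Λ) = QΛQ^T is doubly stochastic. -/
open Real Matrix Finset

/-!
Column 0 of `Q` is the constant `√(2/n) sin(π/4) = 1/√n`, while every other column sums to
zero, being the imaginary part of a phase times a full sum of `n`-th roots of unity. Hence
`Qᵀ 1 = √n e₀` and `P 1 = QΛQᵀ 1 = 1`. For the entries, `P_kl = 1/n + ∑_{j ≠ 0} λ_j Q_kj Q_lj` and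
`|Q_kj Q_lj| ≤ 2/n`, so the nonpositive `λ_j` lower `P_kl` by at most `(2/n)·(1/2) = 1/n`.
-/

theorem IsPrimitiveRoot.geom_sum_pow_eq_zero {K : Type*} [Field K] {ζ : K} {n j : ℕ}
    (hζ : IsPrimitiveRoot ζ n) (hj0 : j ≠ 0) (hjn : j < n) :
    ∑ i ∈ range n, (ζ ^ j) ^ i = 0 := by
  rw [geom_sum_eq (hζ.pow_ne_one_of_pos_of_lt hj0 hjn), ← pow_mul', pow_mul, hζ.pow_eq_one,
    one_pow, sub_self, zero_div]

theorem Real.sum_sin_two_pi_mul_div_add_eq_zero {n j : ℕ} (hj0 : j ≠ 0) (hjn : j < n) (φ : ℝ) :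
    ∑ l : Fin n, sin (2 * π * l * j / n + φ) = 0 := by
  have hn : n ≠ 0 := by omega
  set ζ := Complex.exp (2 * π * Complex.I / n)
  have hexp : ∀ l : ℕ, Complex.exp (↑(2 * π * l * j / n + φ) * Complex.I) =
      Complex.exp (φ * Complex.I) * (ζ ^ j) ^ l := by
    intro l
    rw [← pow_mul, ← Complex.exp_nat_mul, ← Complex.exp_add]
    congr 1
    push_cast
    ring
  calc ∑ l : Fin n, sin (2 * π * l * j / n + φ)
      = (∑ l ∈ range n, Complex.exp (φ * Complex.I) * (ζ ^ j) ^ l).im := by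
        simp only [← hexp, Complex.im_sum, Complex.exp_ofReal_mul_I_im]
        exact Fin.sum_univ_eq_sum_range (fun l => sin (2 * π * l * j / n + φ)) n
    _ = 0 := by
        rw [← mul_sum, (Complex.isPrimitiveRoot_exp n hn).geom_sum_pow_eq_zero hj0 hjn,
          mul_zero, Complex.zero_im]

namespace Matrix

variable {m ι R : Type*} [Fintype ι] [DecidableEq ι]

theorem transpose_mul_diagonal_mul_transpose [CommSemiring R] (Q : Matrix m ι R) (d : ι → R) :
    (Q * diagonal d * Qᵀ)ᵀ = Q * diagonal d * Qᵀ := by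
  rw [transpose_mul, transpose_mul, transpose_transpose, diagonal_transpose, Matrix.mul_assoc]

theorem mul_diagonal_mul_transpose_apply [CommSemiring R] (Q : Matrix m ι R) (d : ι → R)
    (k l : m) : (Q * diagonal d * Qᵀ) k l = ∑ j, d j * (Q k j * Q l j) := by
  rw [mul_apply]
  exact sum_congr rfl fun j _ => by rw [mul_diagonal, transpose_apply]; ring

theorem sum_mul_diagonal_mul_transpose_apply_of_sum_col_eq_zero
    [CommSemiring R] [Fintype m] (Q : Matrix m ι R)
    (d : ι → R) (j₀ : ι) (hcol : ∀ j ≠ j₀, ∑ l, Q l j = 0) (k : m) :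
    ∑ l, (Q * diagonal d * Qᵀ) k l = d j₀ * Q k j₀ * ∑ l, Q l j₀ := by
  simp only [mul_diagonal_mul_transpose_apply]
  rw [sum_comm, sum_eq_single j₀ (fun j _ hj => by simp [← mul_sum, hcol j hj]) (by simp)]
  simp only [← mul_sum, mul_assoc]

theorem add_mul_sum_le_mul_diagonal_mul_transpose_apply [CommRing R] [LinearOrder R]
    [IsStrictOrderedRing R] (Q : Matrix m ι R) (d : ι → R) (j₀ : ι) {b : R}
    (hQ : ∀ k j, |Q k j| ≤ b) (hd : ∀ j ≠ j₀, d j ≤ 0) (k l : m) :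
    d j₀ * (Q k j₀ * Q l j₀) + b ^ 2 * ∑ j ∈ univ \ {j₀}, d j ≤ (Q * diagonal d * Qᵀ) k l := by
  rw [mul_diagonal_mul_transpose_apply, sum_eq_add_sum_sdiff_singleton_of_mem (mem_univ j₀),
    mul_sum]
  refine add_le_add le_rfl (sum_le_sum fun j hj => ?_)
  have hprod : Q k j * Q l j ≤ b ^ 2 := calc
    Q k j * Q l j ≤ |Q k j| * |Q l j| := abs_mul (Q k j) (Q l j) ▸ le_abs_self _
    _ ≤ b ^ 2 :=
      sq b ▸ mul_le_mul (hQ k j) (hQ l j) (abs_nonneg _) ((abs_nonneg _).trans (hQ k j))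
  rw [mul_comm]
  exact mul_le_mul_of_nonpos_left hprod (hd j (by simpa using hj))

end Matrix

theorem stmt_10 (n : ℕ) (hn : 1 ≤ n)
    (Q : Matrix (Fin n) (Fin n) ℝ)
    (hQ : ∀ k j : Fin n,
      Q k j = Real.sqrt (2 / n) * Real.sin (2 * Real.pi * k * j / n + Real.pi / 4))
    (lam : Fin n → ℝ) (hlam0 : lam ⟨0, by omega⟩ = 1)
    (hneg : ∀ j : Fin n, j ≠ ⟨0, by omega⟩ → lam j ≤ 0)
    (hsum : ∑ j ∈ Finset.univ \ {(⟨0, by omega⟩ : Fin n)}, lam j ≥ -(1 / 2)) :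
    (Q * Matrix.diagonal lam * Qᵀ)ᵀ = Q * Matrix.diagonal lam * Qᵀ ∧
    (∀ k l : Fin n, 0 ≤ (Q * Matrix.diagonal lam * Qᵀ) k l) ∧
    (∀ k : Fin n, ∑ l : Fin n, (Q * Matrix.diagonal lam * Qᵀ) k l = 1) ∧
    (∀ l : Fin n, ∑ k : Fin n, (Q * Matrix.diagonal lam * Qᵀ) k l = 1) := by
  set z : Fin n := ⟨0, by omega⟩
  have hsymm := transpose_mul_diagonal_mul_transpose Q lam
  have hcol : ∀ j ≠ z, ∑ l, Q l j = 0 := fun j hj => by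
    simp only [hQ, ← mul_sum]
    rw [sum_sin_two_pi_mul_div_add_eq_zero (Fin.val_ne_iff.mpr hj) j.isLt, mul_zero]
  have hQz : ∀ k l, Q k z * Q l z = 1 / n := fun k l => by
    simp only [hQ, z, Nat.cast_zero, mul_zero, zero_div, zero_add, sin_pi_div_four]
    ring_nf
    rw [sq_sqrt (by positivity), sq_sqrt zero_le_two]
    ring
  have hbound : ∀ k j, |Q k j| ≤ √(2 / n) := fun k j => by
    rw [hQ, abs_mul, abs_of_nonneg (sqrt_nonneg _)]
    exact mul_le_of_le_one_right (sqrt_nonneg _) (abs_sin_le_one _)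
  have hrow : ∀ k, ∑ l, (Q * diagonal lam * Qᵀ) k l = 1 := fun k => by
    rw [sum_mul_diagonal_mul_transpose_apply_of_sum_col_eq_zero Q lam z hcol, hlam0, one_mul,
      mul_sum, sum_congr rfl fun l _ => hQz k l, sum_const, card_univ, Fintype.card_fin, nsmul_eq_mul]
    field_simp
  refine ⟨hsymm, fun k l => ?_, hrow, fun l => ?_⟩
  · have hentry := add_mul_sum_le_mul_diagonal_mul_transpose_apply Q lam z hbound hneg k l
    rw [hlam0, one_mul, hQz, sq_sqrt (by positivity)] at hentry
    have hmass : 2 / n * -(1 / 2) ≤ 2 / n * ∑ j ∈ univ \ {z}, lam j :=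
      mul_le_mul_of_nonneg_left hsum (by positivity)
    linarith [show (2 / n : ℝ) * -(1 / 2) = -(1 / n) by ring]
  · have hrow_l := hrow l
    rwa [← hsymm] at hrow_l
end

section
/- For n ≥ 2 odd, there is no symmetric doubly stochastic n×n matrix with spectrum (1, 0, 0, ..., 0, -1). -/
open Matrix Finset Polynomial

/-!
The eigenvalues of `A` are `1, -1, 0, …, 0`, so `tr A = 0` and `tr A² = 2`. The normalized
all-ones vector `u` is a unit eigenvector for `1`, and a unit eigenvector `v` for `-1` is
orthogonal to it, so `∑ vᵢ = 0`. For `M = A - uuᵀ + vvᵀ` one computes `tr (MᵀM) = tr A² - 2 = 0`,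
hence `A = J/n - vvᵀ`. A nonnegative matrix of trace zero has zero diagonal, so `vᵢ² = 1/n` for
all `i`: the entries of `v` are `±1/√n` and sum to zero, which forces `n` to be even.
-/

namespace Matrix.IsHermitian

variable {𝕜 n : Type*} [RCLike 𝕜] [Fintype n] [DecidableEq n] {A : Matrix n n 𝕜}

theorem trace_pow_eq_sum_eigenvalues_pow (hA : A.IsHermitian) (k : ℕ) :
    (A ^ k).trace = ∑ i, (hA.eigenvalues i : 𝕜) ^ k := by
  conv_lhs => rw [hA.spectral_theorem]
  rw [← map_pow, Unitary.conjStarAlgAut_apply, trace_mul_cycle, Unitary.coe_star_mul_self,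
    one_mul, diagonal_pow, trace_diagonal]
  rfl

theorem trace_pow_eq_sum_roots_charpoly_pow (hA : A.IsHermitian) (k : ℕ) :
    (A ^ k).trace = (A.charpoly.roots.map (· ^ k)).sum := by
  rw [hA.trace_pow_eq_sum_eigenvalues_pow, hA.roots_charpoly_eq_eigenvalues, Multiset.map_map]
  rfl

theorem exists_eigenvector_of_mem_roots_charpoly {A : Matrix n n ℝ}
    (hA : A.IsHermitian) {μ : ℝ} (hμ : μ ∈ A.charpoly.roots) :
    ∃ v : n → ℝ, v ⬝ᵥ v = 1 ∧ A *ᵥ v = μ • v := by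
  rw [hA.roots_charpoly_eq_eigenvalues, Multiset.mem_map] at hμ
  obtain ⟨j, -, hj⟩ := hμ
  refine ⟨hA.eigenvectorBasis j, ?_, by rw [← hj]; exact hA.mulVec_eigenvectorBasis j⟩
  have h := real_inner_self_eq_norm_sq (hA.eigenvectorBasis j)
  rw [hA.eigenvectorBasis.orthonormal.1 j, EuclideanSpace.inner_eq_star_dotProduct] at h
  simpa using h

end Matrix.IsHermitian

section

variable {K ι : Type*} [Field K] [Fintype ι] {A : Matrix ι ι K} {u v : ι → K} {μ ν : K}

theorem dotProduct_eq_zero_of_mulVec_eq_smul (hA : Aᵀ = A) (hu : A *ᵥ u = μ • u)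
    (hv : A *ᵥ v = ν • v) (hμν : μ ≠ ν) : u ⬝ᵥ v = 0 := by
  have h : μ * (u ⬝ᵥ v) = ν * (u ⬝ᵥ v) := by
    rw [← smul_eq_mul, ← smul_dotProduct, ← hu, ← smul_eq_mul, ← dotProduct_smul, ← hv,
      dotProduct_mulVec, ← mulVec_transpose, hA, dotProduct_comm]
  have h' : (μ - ν) * (u ⬝ᵥ v) = 0 := by rw [sub_mul, h, sub_self]
  exact (mul_eq_zero.1 h').resolve_left (sub_ne_zero.2 hμν)

end

variable {ι : Type*} [Fintype ι]

theorem eq_vecMulVec_sub_vecMulVec_of_trace_mul_self_eq_two {A : Matrix ι ι ℝ} {u v : ι → ℝ}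
    (hA : Aᵀ = A) (hu : u ⬝ᵥ u = 1) (hv : v ⬝ᵥ v = 1) (hAu : A *ᵥ u = u) (hAv : A *ᵥ v = -v)
    (htr : (A * A).trace = 2) : A = vecMulVec u u - vecMulVec v v := by
  have huv : u ⬝ᵥ v = 0 :=
    dotProduct_eq_zero_of_mulVec_eq_smul hA (μ := 1) (ν := -1) (by rwa [one_smul])
      (by rwa [neg_one_smul]) (by norm_num)
  set P := vecMulVec u u
  set Q := vecMulVec v v
  have hAP : A * P = P := by rw [mul_vecMulVec, hAu]
  have hAQ : A * Q = -Q := by rw [mul_vecMulVec, hAv, neg_vecMulVec]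
  have hPA : P * A = P := by rw [vecMulVec_mul, ← mulVec_transpose, hA, hAu]
  have hQA : Q * A = -Q := by rw [vecMulVec_mul, ← mulVec_transpose, hA, hAv, vecMulVec_neg]
  have hPP : P * P = P := by rw [vecMulVec_mul_vecMulVec, hu, one_smul]
  have hQQ : Q * Q = Q := by rw [vecMulVec_mul_vecMulVec, hv, one_smul]
  have hPQ : P * Q = 0 := by rw [vecMulVec_mul_vecMulVec, huv, zero_smul, vecMulVec_zero]
  have hQP : Q * P = 0 := by
    rw [vecMulVec_mul_vecMulVec, dotProduct_comm, huv, zero_smul, vecMulVec_zero]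
  suffices hM0 : A - P + Q = 0 by rwa [sub_add, sub_eq_zero] at hM0
  have hM : (A - P + Q)ᴴ = A - P + Q := by
    simp [P, Q, conjTranspose_eq_transpose_of_trivial, hA, transpose_vecMulVec]
  have hMM : (A - P + Q) * (A - P + Q) = A * A - P - Q := by
    simp only [mul_add, add_mul, mul_sub, sub_mul, hAP, hAQ, hPA, hQA, hPP, hQQ, hPQ, hQP]
    abel
  rw [← trace_conjTranspose_mul_self_eq_zero_iff, hM, hMM, trace_sub, trace_sub, htr,
    trace_vecMulVec, trace_vecMulVec, hu, hv]
  norm_num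

theorem even_card_of_sum_eq_zero_of_sq_eq {v : ι → ℝ} {s : ℝ} (hs : s ≠ 0)
    (hv : ∀ i, v i ^ 2 = s ^ 2) (hsum : ∑ i, v i = 0) : Even (Fintype.card ι) := by
  have hshift : ∀ i, v i + s = 2 * s * if v i = s then 1 else 0 := by
    intro i
    rcases sq_eq_sq_iff_eq_or_eq_neg.1 (hv i) with h | h
    · rw [if_pos h, h]; ring
    · rw [if_neg (fun h' => hs (by linarith)), h]; ring
  have hcount : (Fintype.card ι : ℝ) * s = 2 * s * #{i | v i = s} := by
    rw [← Finset.sum_boole, Finset.mul_sum, ← Finset.sum_congr rfl (fun i _ => hshift i),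
      Finset.sum_add_distrib, hsum]
    simp
  have hcard : (Fintype.card ι : ℝ) = 2 * #{i | v i = s} :=
    mul_right_cancel₀ hs (by rw [hcount]; ring)
  exact ⟨#{i | v i = s}, by rw [← two_mul]; exact_mod_cast hcard⟩

theorem roots_X_sub_one_mul_X_add_one_mul_X_pow {R : Type*} [CommRing R] [IsDomain R] (m : ℕ) :
    ((X - 1) * (X + 1) * X ^ m : R[X]).roots = 1 ::ₘ (-1) ::ₘ Multiset.replicate m 0 := by
  have h1 : (X - 1 : R[X]) = X - C 1 := by rw [C_1]
  have h2 : (X + 1 : R[X]) = X - C (-1) := by rw [C_neg, C_1, sub_neg_eq_add]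
  rw [h1, h2, roots_mul (mul_ne_zero (mul_ne_zero (X_sub_C_ne_zero _) (X_sub_C_ne_zero _))
      (pow_ne_zero _ X_ne_zero)), roots_mul (mul_ne_zero (X_sub_C_ne_zero _) (X_sub_C_ne_zero _)),
    roots_X_sub_C, roots_X_sub_C, roots_pow, roots_X, Multiset.nsmul_singleton]
  rfl

theorem even_card_of_trace_eq_zero_of_trace_mul_self_eq_two {A : Matrix ι ι ℝ} (hA : Aᵀ = A)
    (hnonneg : ∀ i k, 0 ≤ A i k) (hrow : ∀ i, ∑ k, A i k = 1) (htr : A.trace = 0)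
    (htr2 : (A * A).trace = 2) {v : ι → ℝ} (hv : v ⬝ᵥ v = 1) (hAv : A *ᵥ v = -v) :
    Even (Fintype.card ι) := by
  have hcard : (0 : ℝ) < Fintype.card ι := by
    exact_mod_cast Finset.card_pos.2 (Finset.nonempty_of_sum_ne_zero (hv ▸ one_ne_zero))
  set s : ℝ := (√(Fintype.card ι))⁻¹
  set u : ι → ℝ := fun _ => s
  have hs : s ≠ 0 := by positivity
  have hu : u ⬝ᵥ u = 1 := by
    simp only [u, s, dotProduct, sum_const, card_univ, nsmul_eq_mul]
    rw [← mul_inv, Real.mul_self_sqrt hcard.le, mul_inv_cancel₀ hcard.ne']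
  have hAu : A *ᵥ u = u := funext fun i => by simp [u, mulVec, dotProduct, ← Finset.sum_mul, hrow]
  have hdecomp := eq_vecMulVec_sub_vecMulVec_of_trace_mul_self_eq_two hA hu hv hAu hAv htr2
  have hsum : ∑ i, v i = 0 := by
    have := dotProduct_eq_zero_of_mulVec_eq_smul hA (μ := 1) (ν := -1) (by rwa [one_smul])
      (by rwa [neg_one_smul]) (by norm_num)
    simpa [u, dotProduct, ← Finset.mul_sum, hs] using this
  have hdiag : ∀ i, A i i = 0 := fun i =>
    (Finset.sum_eq_zero_iff_of_nonneg fun i _ => hnonneg i i).1 htr i (mem_univ i)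
  refine even_card_of_sum_eq_zero_of_sq_eq hs (fun i => ?_) hsum
  have := congrFun₂ hdecomp i i
  rw [hdiag, Matrix.sub_apply, vecMulVec_apply, vecMulVec_apply] at this
  linarith

theorem stmt_15_general (n : ℕ) (hodd : Odd n) :
    ¬ ∃ A : Matrix (Fin n) (Fin n) ℝ,
      Aᵀ = A ∧
      (∀ k l : Fin n, 0 ≤ A k l) ∧
      (∀ k : Fin n, ∑ l : Fin n, A k l = 1) ∧
      (∀ l : Fin n, ∑ k : Fin n, A k l = 1) ∧
      A.charpoly =
        (Polynomial.X - 1) * (Polynomial.X + 1) * Polynomial.X ^ (n - 2) := by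
  rintro ⟨A, hsym, hnonneg, hrow, -, hcp⟩
  have hA : A.IsHermitian := by rwa [IsHermitian, conjTranspose_eq_transpose_of_trivial]
  have hroots : A.charpoly.roots = 1 ::ₘ (-1) ::ₘ Multiset.replicate (n - 2) 0 := by
    rw [hcp, roots_X_sub_one_mul_X_add_one_mul_X_pow]
  have htr : A.trace = 0 := by
    simpa [hroots] using hA.trace_pow_eq_sum_roots_charpoly_pow 1
  have htr2 : (A * A).trace = 2 := by
    rw [← sq, hA.trace_pow_eq_sum_roots_charpoly_pow, hroots]
    norm_num
  obtain ⟨v, hv, hAv⟩ := hA.exists_eigenvector_of_mem_roots_charpoly (μ := -1)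
    (by simp [hroots])
  have heven := even_card_of_trace_eq_zero_of_trace_mul_self_eq_two hsym hnonneg hrow htr htr2 hv
    (by rwa [neg_one_smul] at hAv)
  exact Nat.not_even_iff_odd.2 hodd (by simpa using heven)

theorem stmt_15 (n : ℕ) (hn : 2 ≤ n) (hodd : Odd n) :
    ¬ ∃ A : Matrix (Fin n) (Fin n) ℝ,
      Aᵀ = A ∧
      (∀ k l : Fin n, 0 ≤ A k l) ∧
      (∀ k : Fin n, ∑ l : Fin n, A k l = 1) ∧
      (∀ l : Fin n, ∑ k : Fin n, A k l = 1) ∧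
      A.charpoly =
        (Polynomial.X - 1) * (Polynomial.X + 1) * Polynomial.X ^ (n - 2) :=
  stmt_15_general n hodd
end

section
/- The diagonal entries of H(v) Λ H(v), where H(v) is the Householder matrix for v = (1-√n, 1, ..., 1)^T and Λ = diag(1, λ_1, ..., λ_{n-1}), are given by (H(v)ΛH(v))_{k,k} = 1/n + α² ∑_{j=1, j≠k}^{n-1} λ_j + (1-α)² λ_k for k ∈ {1, ..., n-1}, where α = 1/(√n(√n - 1)). -/
/-!
Since `‖v‖² = 2√n(√n - 1)`, the scalar `2/‖v‖²` is `α`. For `k ≠ 0` the `k`-th row of the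
symmetric matrix `H` is then `1/√n` in column `0`, `1 - α` in column `k` and `-α` elsewhere, and
`(H Λ H)ₖₖ = ∑ⱼ λⱼ Hₖⱼ²`.
-/

open Real Matrix Finset

namespace Matrix

variable {ι R : Type*}

theorem isSymm_vecMulVec_self [CommMagma R] (v : ι → R) : (vecMulVec v v).IsSymm :=
  transpose_vecMulVec v v

theorem isSymm_one_sub_smul_vecMulVec_self [DecidableEq ι] [CommRing R] (c : R) (v : ι → R) :
    (1 - c • vecMulVec v v).IsSymm :=
  isSymm_one.sub ((isSymm_vecMulVec_self v).smul c)

theorem IsSymm.mul_diagonal_mul_apply_self [Fintype ι] [DecidableEq ι] [CommSemiring R]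
    {A : Matrix ι ι R} (hA : A.IsSymm) (d : ι → R) (k : ι) :
    (A * diagonal d * A) k k = ∑ j, d j * A k j ^ 2 := by
  rw [mul_apply]
  refine sum_congr rfl fun j _ => ?_
  rw [mul_diagonal, hA.apply j k]
  ring

end Matrix

theorem sum_sq_ite_one_sub_sqrt {n : ℕ} (i₀ : Fin n) :
    ∑ i : Fin n, (if i = i₀ then 1 - √n else 1) ^ 2 = 2 * √n * (√n - 1) := by
  rw [← add_sum_erase _ _ (mem_univ i₀), if_pos rfl,
    sum_congr rfl fun i hi => by rw [if_neg (ne_of_mem_erase hi)]]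
  simp only [one_pow, sum_const, card_erase_of_mem (mem_univ i₀), card_univ, Fintype.card_fin,
    nsmul_eq_mul, mul_one, Nat.cast_sub i₀.pos, Nat.cast_one]
  linear_combination -sq_sqrt (n.cast_nonneg : (0 : ℝ) ≤ n)

theorem stmt_17 (n : ℕ) (hn : 2 ≤ n)
    (v : Fin n → ℝ) (hv : ∀ i : Fin n, v i = if i = ⟨0, by omega⟩ then 1 - Real.sqrt n else 1)
    (H : Matrix (Fin n) (Fin n) ℝ)
    (hH : H = 1 - (2 / ∑ i : Fin n, v i ^ 2) • Matrix.vecMulVec v v)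
    (lam : Fin n → ℝ) (hlam0 : lam ⟨0, by omega⟩ = 1)
    (α : ℝ) (hα : α = 1 / (Real.sqrt n * (Real.sqrt n - 1))) :
    ∀ k : Fin n, k ≠ ⟨0, by omega⟩ →
      (H * Matrix.diagonal lam * H) k k =
        1 / n + α ^ 2 * (∑ j ∈ Finset.univ \ {(⟨0, by omega⟩ : Fin n), k}, lam j)
          + (1 - α) ^ 2 * lam k := by
  intro k hk
  set i₀ : Fin n := ⟨0, by omega⟩
  have hvf : v = fun i => if i = i₀ then 1 - √n else 1 := funext hv
  have hc : 2 / ∑ i, v i ^ 2 = α := by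
    rw [hvf, sum_sq_ite_one_sub_sqrt, mul_assoc, div_mul_cancel_left₀ two_ne_zero, hα, one_div]
  have hH_apply : ∀ j, H k j = (if k = j then 1 else 0) - α * v k * v j := by
    simp [hH, hc, one_apply, vecMulVec_apply, mul_assoc]
  have hvk : v k = 1 := by simp [hv, hk]
  have one_lt_sqrt_n : 1 < √n := by
    rw [lt_sqrt zero_le_one]
    exact_mod_cast (by omega : 1 ^ 2 < n)
  have hHk₀ : H k i₀ = 1 / √n := by
    rw [hH_apply, if_neg hk, hvk, hv, if_pos rfl, hα]
    field_simp [(by linarith : √n - 1 ≠ 0)]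
    ring
  have hrest : ∀ j ∈ univ \ {i₀, k}, lam j * H k j ^ 2 = α ^ 2 * lam j := by
    intro j hj
    simp only [mem_sdiff, mem_univ, mem_insert, mem_singleton, true_and, not_or] at hj
    rw [hH_apply, if_neg (Ne.symm hj.2), hvk, hv, if_neg hj.1]
    ring
  have hsymm : H.IsSymm := hH ▸ isSymm_one_sub_smul_vecMulVec_self _ v
  rw [hsymm.mul_diagonal_mul_apply_self,
    ← sum_sdiff (subset_univ {i₀, k}), sum_pair (Ne.symm hk), sum_congr rfl hrest, ← mul_sum,
    hlam0, hHk₀, hH_apply, if_pos rfl, hvk, div_pow, sq_sqrt n.cast_nonneg]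
  ring
end
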